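/- Let G be a totally disconnected, locally compact strongly topological gyrogroup. Then every neighborhood of the identity contains a compact open L-subgyrogroup. -/

import Mathlib

open Set Topology

universe u

class Gyrogroup (G : Type u) where
  op : G → G → G
  one : G
  inv : G → G
  gyr : G → G → G ≃ G
  one_op : ∀ g, op one g = g
  op_one : ∀ g, op g one = g
  inv_op : ∀ g, op (inv g) g = one
  op_inv : ∀ g, op g (inv g) = one
  unique_one : ∀ e : G, (∀ g, op e g = g ∧ op g e = g) → e = one
  unique_inv : ∀ g h : G, (op h g = one ∧ op g h = one) → h = inv g
  gyr_op : ∀ g h f, op g (op h f) = op (op g h) (gyr g h f)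
  gyr_hom : ∀ g h a b, gyr g h (op a b) = op (gyr g h a) (gyr g h b)
  loop : ∀ g h, gyr g h = gyr (op g h) h

namespace Gyrogroup

variable {G : Type u} [Gyrogroup G]

/-- `H` is a subgyrogroup: nonempty and a gyrogroup under the restricted operations. -/
def IsSubgyrogroup (H : Set G) : Prop :=
  H.Nonempty ∧ one ∈ H ∧
  (∀ a ∈ H, ∀ b ∈ H, op a b ∈ H) ∧
  (∀ a ∈ H, inv a ∈ H) ∧
  (∀ a ∈ H, ∀ b ∈ H, Set.BijOn (gyr a b) H H)

/-- `H` is an L-subgyrogroup: `gyr g h` fixes `H` setwise for every `g ∈ G`, `h ∈ H`. -/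
def IsLSubgyrogroup (H : Set G) : Prop :=
  IsSubgyrogroup H ∧ ∀ g : G, ∀ h ∈ H, (gyr g h) '' H = H

def leftCoset (a : G) (H : Set G) : Set G := (fun h => op a h) '' H

/-- The subgyrogroup generated by `S`. -/
def generatedSubgyrogroup (S : Set G) : Set G :=
  ⋂₀ {H : Set G | IsSubgyrogroup H ∧ S ⊆ H}

/-- The gyrogroup operations are continuous (topological gyrogroup). -/
def ContinuousGyroOps (G : Type u) [Gyrogroup G] [TopologicalSpace G] : Prop :=
  Continuous (fun p : G × G => op p.1 p.2) ∧ Continuous (inv : G → G)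

/-- The topology coincides with the order topology of some linear order. -/
def TopologicallyOrderable (G : Type u) [t : TopologicalSpace G] : Prop :=
  ∃ l : LinearOrder G, t = TopologicalSpace.generateFrom
      {s : Set G | ∃ a : G, s = {x | l.lt a x} ∨ s = {x | l.lt x a}}

/-- A strongly topological gyrogroup: a topological gyrogroup with a neighborhood base
at `1` whose members are invariant under all gyroautomorphisms. -/
def StronglyTopologicalGyrogroup (G : Type u) [Gyrogroup G] [TopologicalSpace G] : Prop :=
  ContinuousGyroOps G ∧
  ∃ 𝒰 : Set (Set G), (∀ U ∈ 𝒰, U ∈ nhds (one : G)) ∧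
    (∀ V ∈ nhds (one : G), ∃ U ∈ 𝒰, U ⊆ V) ∧
    (∀ U ∈ 𝒰, ∀ x y : G, (gyr x y) '' U = U)

def StronglyTopologicallyOrderable (G : Type u) [Gyrogroup G] [TopologicalSpace G] : Prop :=
  StronglyTopologicalGyrogroup G ∧ TopologicallyOrderable G

end Gyrogroup

/-!
Shrink the given neighbourhood of `1` to a compact open set `Z`, which exists because the space is
locally compact and totally disconnected. By compactness, some neighbourhood `W` of `1` satisfies
`Z ⊕ W ⊆ Z`; inside `W` choose a symmetric neighbourhood `V` fixed by all gyroautomorphisms, as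
the strong topology allows. The words `(⋯((v₁ ⊕ v₂) ⊕ v₃) ⋯) ⊕ vₙ` with letters in `V` then
form an L-subgyrogroup `H ⊆ Z`. It is open, being a neighbourhood of `1` closed under `⊕`, and
closed, since `g = (g ⊕ h) ⊕ gyr[g, h](⊖h)` shows that `g ⊕ H` misses `H` when `g ∉ H`. Being a
closed subset of `Z`, `H` is compact.
-/

open Filter

theorem exists_isCompact_isOpen_subset_of_mem_nhds {X : Type*} [TopologicalSpace X] [T2Space X]
    [LocallyCompactSpace X] [TotallyDisconnectedSpace X] {x : X} {U : Set X} (hU : U ∈ 𝓝 x) :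
    ∃ Z, IsCompact Z ∧ IsOpen Z ∧ x ∈ Z ∧ Z ⊆ U := by
  obtain ⟨K, hK, hKU, hKc⟩ := local_compact_nhds hU
  obtain ⟨Z, hZ, hxZ, hZK⟩ := loc_compact_Haus_tot_disc_of_zero_dim.mem_nhds_iff.1 hK
  exact ⟨Z, hKc.of_isClosed_subset hZ.1 hZK, hZ.2, hxZ, hZK.trans hKU⟩

namespace Gyrogroup

variable {G : Type u} [Gyrogroup G]

theorem op_left_cancel (a : G) {x y : G} (h : op a x = op a y) : x = y := by
  have h' : op (inv a) (op a x) = op (inv a) (op a y) := by rw [h]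
  rw [gyr_op, gyr_op, inv_op, one_op, one_op] at h'
  exact (gyr (inv a) a).injective h'

theorem gyr_one_left (b c : G) : gyr one b c = c := by
  apply op_left_cancel b
  simpa only [one_op] using (gyr_op one b c).symm

theorem gyr_inv_self (a c : G) : gyr (inv a) a c = c := by
  rw [loop, inv_op, gyr_one_left]

theorem gyr_self_inv (a c : G) : gyr a (inv a) c = c := by
  rw [loop, op_inv, gyr_one_left]

theorem inv_op_cancel_left (a x : G) : op (inv a) (op a x) = x := by
  rw [gyr_op, inv_op, one_op, gyr_inv_self]

theorem op_inv_cancel_left (a x : G) : op a (op (inv a) x) = x := by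
  rw [gyr_op, op_inv, one_op, gyr_self_inv]

theorem eq_inv_of_op_eq_one {a b : G} (h : op a b = one) : b = inv a := by
  simpa only [h, op_one] using (inv_op_cancel_left a b).symm

protected theorem inv_inv (a : G) : inv (inv a) = a :=
  (unique_inv (inv a) a ⟨op_inv a, inv_op a⟩).symm

protected theorem inv_one : (inv one : G) = one :=
  (eq_inv_of_op_eq_one (one_op one)).symm

theorem gyr_one (x y : G) : gyr x y one = one := by
  apply op_left_cancel (gyr x y one)
  rw [op_one, ← gyr_hom, one_op]

theorem gyr_inv (x y a : G) : gyr x y (inv a) = inv (gyr x y a) := by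
  apply eq_inv_of_op_eq_one
  rw [← gyr_hom, op_inv, gyr_one]

theorem inv_op_eq_gyr (a b : G) : inv (op a b) = gyr a b (op (inv b) (inv a)) := by
  refine (eq_inv_of_op_eq_one ?_).symm
  rw [← gyr_op, op_inv_cancel_left, op_inv]

theorem gyr_symm_op (x y a b : G) :
    (gyr x y).symm (op a b) = op ((gyr x y).symm a) ((gyr x y).symm b) :=
  (gyr x y).injective (by simp only [gyr_hom, Equiv.apply_symm_apply])

theorem op_op_gyr_inv (g h : G) : op (op g h) (gyr g h (inv h)) = g := by
  rw [← gyr_op, op_inv, op_one]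

def IsGyrInvariant (V : Set G) : Prop :=
  ∀ x y v : G, gyr x y v ∈ V ↔ v ∈ V

theorem isGyrInvariant_iff_image_eq {V : Set G} :
    IsGyrInvariant V ↔ ∀ x y : G, gyr x y '' V = V := by
  simp only [IsGyrInvariant, Equiv.image_eq_preimage_symm, Set.ext_iff, mem_preimage]
  refine forall₂_congr fun x y => ⟨fun h v => ?_, fun h v => ?_⟩
  · rw [← h, Equiv.apply_symm_apply]
  · rw [← h, Equiv.symm_apply_apply]

theorem IsGyrInvariant.inter {V W : Set G} (hV : IsGyrInvariant V) (hW : IsGyrInvariant W) :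
    IsGyrInvariant (V ∩ W) :=
  fun x y v => and_congr (hV x y v) (hW x y v)

theorem IsGyrInvariant.preimage_inv {V : Set G} (hV : IsGyrInvariant V) :
    IsGyrInvariant (inv ⁻¹' V) := by
  intro x y v
  simp only [mem_preimage, ← gyr_inv, hV x y]

/-- For a symmetric gyr-invariant `V ∋ 1`, this is the subgyrogroup generated by `V`. -/
inductive RightSpan (V : Set G) : G → Prop
  | of {v : G} : v ∈ V → RightSpan V v
  | op_right {w v : G} : RightSpan V w → v ∈ V → RightSpan V (op w v)

namespace RightSpan

variable {V : Set G}

theorem map {f : G → G} (hf : ∀ a b, f (op a b) = op (f a) (f b)) (hV : MapsTo f V V) {w : G}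
    (hw : RightSpan V w) : RightSpan V (f w) := by
  induction hw with
  | of hv => exact .of (hV hv)
  | op_right _ hv ih => rw [hf]; exact .op_right ih (hV hv)

theorem isGyrInvariant (hV : IsGyrInvariant V) : IsGyrInvariant {w | RightSpan V w} := by
  intro x y w
  refine ⟨fun hw => ?_, map (gyr_hom x y) (fun v hv => (hV x y v).2 hv)⟩
  simpa using map (gyr_symm_op x y) (fun v hv => (hV x y _).1 (by simpa using hv)) hw

theorem op (hV : IsGyrInvariant V) {a b : G} (ha : RightSpan V a) (hb : RightSpan V b) :
    RightSpan V (op a b) := by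
  induction hb with
  | of hv => exact .op_right ha hv
  | @op_right u v _ hv ih =>
    rw [gyr_op]
    exact .op_right ih ((hV a u v).2 hv)

theorem inv (hV : IsGyrInvariant V) (hVinv : ∀ v ∈ V, inv v ∈ V) {w : G} (hw : RightSpan V w) :
    RightSpan V (inv w) := by
  induction hw with
  | of hv => exact .of (hVinv _ hv)
  | @op_right u v _ hv ih =>
    rw [inv_op_eq_gyr]
    exact ((isGyrInvariant hV) u v _).2 (.op hV (.of (hVinv v hv)) ih)

theorem subset {Z : Set G} (hZ : one ∈ Z) (hZV : ∀ z ∈ Z, ∀ v ∈ V, Gyrogroup.op z v ∈ Z) :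
    {w | RightSpan V w} ⊆ Z := by
  intro w hw
  induction hw with
  | @of v hv => simpa only [one_op] using hZV one hZ v hv
  | op_right _ hv ih => exact hZV _ ih _ hv

end RightSpan

theorem isLSubgyrogroup_rightSpan {V : Set G} (hV1 : one ∈ V) (hVinv : ∀ v ∈ V, inv v ∈ V)
    (hV : IsGyrInvariant V) : IsLSubgyrogroup {w | RightSpan V w} := by
  have hH := isGyrInvariant_iff_image_eq.1 (RightSpan.isGyrInvariant hV)
  refine ⟨⟨⟨one, .of hV1⟩, .of hV1, fun a ha b hb => .op hV ha hb,
    fun a ha => .inv hV hVinv ha, fun a _ b _ => ?_⟩, fun g h _ => hH g h⟩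
  simpa only [hH] using
    (gyr a b).injective.injOn.bijOn_image (s := {w | RightSpan V w})

section Topology

variable [TopologicalSpace G]

theorem ContinuousGyroOps.t2Space [T1Space G] (hG : ContinuousGyroOps G) : T2Space G := by
  rw [t2_iff_isClosed_diagonal]
  have hdiag : diagonal G = (fun p : G × G => op (inv p.1) p.2) ⁻¹' {one} := by
    ext ⟨x, y⟩
    simp only [mem_diagonal_iff, mem_preimage, mem_singleton_iff]
    refine ⟨fun h => h ▸ inv_op x, fun h => ?_⟩
    rw [eq_inv_of_op_eq_one h, Gyrogroup.inv_inv]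
  rw [hdiag]
  exact isClosed_singleton.preimage
    (hG.1.comp ((hG.2.comp continuous_fst).prodMk continuous_snd))

theorem leftCoset_mem_nhds (hG : ContinuousGyroOps G) (a : G) {V : Set G} (hV : V ∈ 𝓝 one) :
    leftCoset a V ∈ 𝓝 a := by
  have hcoset : leftCoset a V = (fun x => op (inv a) x) ⁻¹' V := by
    ext x
    refine ⟨?_, fun hx => ⟨op (inv a) x, hx, op_inv_cancel_left a x⟩⟩
    rintro ⟨v, hv, rfl⟩
    simpa only [mem_preimage, inv_op_cancel_left] using hv
  rw [hcoset]
  refine (hG.1.comp (continuous_const.prodMk continuous_id)).continuousAt.preimage_mem_nhds ?_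
  simpa only [Function.comp_apply, id, inv_op] using hV

theorem IsSubgyrogroup.isOpen_of_mem_nhds_one (hG : ContinuousGyroOps G) {H : Set G}
    (hH : IsSubgyrogroup H) (hH1 : H ∈ 𝓝 one) : IsOpen H := by
  refine isOpen_iff_mem_nhds.2 fun h hh => mem_of_superset (leftCoset_mem_nhds hG h hH1) ?_
  rintro _ ⟨k, hk, rfl⟩
  exact hH.2.2.1 h hh k hk

theorem IsLSubgyrogroup.isClosed_of_mem_nhds_one (hG : ContinuousGyroOps G) {H : Set G}
    (hH : IsLSubgyrogroup H) (hH1 : H ∈ 𝓝 one) : IsClosed H := by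
  refine isOpen_compl_iff.1 <| isOpen_iff_mem_nhds.2 fun g hg =>
    mem_of_superset (leftCoset_mem_nhds hG g hH1) ?_
  rintro _ ⟨h, hh, rfl⟩ hgh
  have hgyr : gyr g h (inv h) ∈ H := hH.2 g h hh ▸ mem_image_of_mem _ (hH.1.2.2.2.1 h hh)
  exact hg (op_op_gyr_inv g h ▸ hH.1.2.2.1 _ hgh _ hgyr)

theorem exists_mem_nhds_one_forall_op_mem (hG : ContinuousGyroOps G) {Z : Set G}
    (hZc : IsCompact Z) (hZo : IsOpen Z) : ∃ W ∈ 𝓝 one, ∀ z ∈ Z, ∀ w ∈ W, op z w ∈ Z := by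
  refine ⟨_, hZc.eventually_forall_of_forall_eventually fun z hz => ?_, fun z hz w hw => hw z hz⟩
  have hcont : Continuous fun p : G × G => op p.2 p.1 := hG.1.comp continuous_swap
  exact hcont.continuousAt.preimage_mem_nhds (hZo.mem_nhds (by simpa only [op_one] using hz))

theorem StronglyTopologicalGyrogroup.exists_symm_isGyrInvariant_subset
    (hs : StronglyTopologicalGyrogroup G) {W : Set G} (hW : W ∈ 𝓝 one) :
    ∃ V ∈ 𝓝 one, V ⊆ W ∧ (∀ v ∈ V, inv v ∈ V) ∧ IsGyrInvariant V := by
  obtain ⟨⟨-, hinv⟩, 𝒰, h𝒰n, h𝒰b, h𝒰g⟩ := hs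
  obtain ⟨U₀, hU₀, hU₀W⟩ := h𝒰b W hW
  have hU₀g : IsGyrInvariant U₀ := isGyrInvariant_iff_image_eq.2 (h𝒰g U₀ hU₀)
  have hU₀inv : inv ⁻¹' U₀ ∈ 𝓝 one :=
    hinv.continuousAt.preimage_mem_nhds (by simpa only [Gyrogroup.inv_one] using h𝒰n U₀ hU₀)
  refine ⟨U₀ ∩ inv ⁻¹' U₀, inter_mem (h𝒰n U₀ hU₀) hU₀inv, inter_subset_left.trans hU₀W,
    fun v hv => ⟨hv.2, by simpa only [mem_preimage, Gyrogroup.inv_inv] using hv.1⟩,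
    hU₀g.inter hU₀g.preimage_inv⟩

end Topology

end Gyrogroup

open Gyrogroup

/-- In a totally disconnected locally compact strongly topological gyrogroup, every
neighborhood of the identity contains a compact open L-subgyrogroup. -/
theorem stmt15 {G : Type u} [Gyrogroup G] [TopologicalSpace G]
    [TotallyDisconnectedSpace G] [LocallyCompactSpace G]
    (hs : StronglyTopologicalGyrogroup G) :
    ∀ U ∈ nhds (one : G), ∃ H : Set G, H ⊆ U ∧ IsCompact H ∧ IsOpen H ∧
      IsLSubgyrogroup H := by
  intro U hU
  have : T2Space G := hs.1.t2Space
  obtain ⟨Z, hZc, hZo, hZ1, hZU⟩ := exists_isCompact_isOpen_subset_of_mem_nhds hU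
  obtain ⟨W, hW, hZW⟩ := exists_mem_nhds_one_forall_op_mem hs.1 hZc hZo
  obtain ⟨V, hV, hVW, hVinv, hVg⟩ := hs.exists_symm_isGyrInvariant_subset hW
  have hH : IsLSubgyrogroup {w | RightSpan V w} :=
    isLSubgyrogroup_rightSpan (mem_of_mem_nhds hV) hVinv hVg
  have hH1 : {w | RightSpan V w} ∈ 𝓝 one := mem_of_superset hV fun _ => RightSpan.of
  have hHZ : {w | RightSpan V w} ⊆ Z :=
    RightSpan.subset hZ1 fun z hz v hv => hZW z hz v (hVW hv)
  exact ⟨_, hHZ.trans hZU, hZc.of_isClosed_subset (hH.isClosed_of_mem_nhds_one hs.1 hH1) hHZ,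
    hH.1.isOpen_of_mem_nhds_one hs.1 hH1, hH⟩
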